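/- Let $A \subseteq \Sigma^*$ be a set of words over a finite alphabet $\Sigma$ that is Markovian: $A$ is closed under prefixes and for each letter $x \in \Sigma$ there is a set $\Sigma_x \subseteq \Sigma$ such that a word in $A$ ending in $x$ extends to a word in $A$ of one greater length exactly by appending a letter of $\Sigma_x$. Let $\alpha > 1$ and suppose for each $x \in \Sigma$ there is $r(x) \geq 1$ such that the number of $r(x)$-tuples of letters that can follow $x$ in words of $A$ is strictly less than $\alpha^{r(x)}$. Then $\limsup_{N\to\infty} |A_N|^{1/N} < \alpha$, where $A_N$ is the set of words of length $N$ in $A$. -/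

import Mathlib

/-!
Let `F x n` be the set of length-`n` tuples that can follow the letter `x`. Cutting a tuple
following `x` after its first `m ≥ 1` letters gives a tuple following `x`, and the rest follows
the last letter of the cut, so `|F x (m + n)| ≤ |F x m| · maxᵧ |F y n|`. Pick `β < α` with
`|F x (r x)| < β ^ r x` for every `x`; iterating the cut in blocks of length `r x` gives
`|F x n| ≤ C β ^ n`. Every word of length `N + 1` is a letter followed by a tuple of length `N`,
hence `|A_(N+1)| ≤ |Σ| C β ^ N`, and the `N`-th root of the right-hand side tends to `β`.
-/

open Filter Topology

theorem exists_lt_forall_lt_pow {ι : Type*} [Finite ι] {a : ι → ℝ} {r : ι → ℕ} {α : ℝ}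
    (hα : 1 < α) (h : ∀ i, a i < α ^ r i) : ∃ β, 1 < β ∧ β < α ∧ ∀ i, a i < β ^ r i := by
  have hpow : ∀ᶠ β in 𝓝[<] α, ∀ i, a i < β ^ r i := eventually_all.2 fun i =>
    (((continuous_pow (r i)).tendsto α).eventually (lt_mem_nhds (h i))).filter_mono
      nhdsWithin_le_nhds
  obtain ⟨β, hβ, hβ1, hβα⟩ := (hpow.and (Ioo_mem_nhdsLT hα)).exists
  exact ⟨β, hβ1, hβα, hβ⟩

theorem exists_forall_le_mul_pow {ι : Type*} [Fintype ι] {f : ι → ℕ → ℝ} {r : ι → ℕ} {β : ℝ}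
    (hr : ∀ i, 1 ≤ r i) (hβ : 1 ≤ β) (hf : ∀ i n, 0 ≤ f i n)
    (hstep : ∀ i n B, (∀ j, f j n ≤ B) → f i (r i + n) ≤ β ^ r i * B) :
    ∃ C, 0 ≤ C ∧ ∀ i n, f i n ≤ C * β ^ n := by
  have hinit : ∀ i, 0 ≤ ∑ k ∈ Finset.range (r i), f i k := fun i =>
    Finset.sum_nonneg fun k _ => hf i k
  set C := ∑ i, ∑ k ∈ Finset.range (r i), f i k
  have hC : 0 ≤ C := Finset.sum_nonneg fun i _ => hinit i
  refine ⟨C, hC, fun i n => ?_⟩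
  induction n using Nat.strong_induction_on generalizing i with
  | _ n ih =>
    by_cases hn : n < r i
    · calc f i n ≤ ∑ k ∈ Finset.range (r i), f i k :=
            Finset.single_le_sum (fun k _ => hf i k) (Finset.mem_range.2 hn)
        _ ≤ C := Finset.single_le_sum (fun j _ => hinit j) (Finset.mem_univ i)
        _ ≤ C * β ^ n := le_mul_of_one_le_right hC (one_le_pow₀ hβ)
    · obtain ⟨m, rfl⟩ := Nat.exists_eq_add_of_le (not_lt.1 hn)
      calc f i (r i + m) ≤ β ^ r i * (C * β ^ m) :=
            hstep i m _ fun j => ih m (by have := hr i; omega) j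
        _ = C * β ^ (r i + m) := by ring

theorem limsup_rpow_one_div_le {u : ℕ → ℝ} {D β : ℝ} (hu : ∀ N, 0 ≤ u N) (hβ : 0 < β)
    (h : ∀ᶠ N in atTop, u N ≤ D * β ^ N) :
    limsup (fun N : ℕ => u N ^ ((1 : ℝ) / N)) atTop ≤ β := by
  have hD : 0 < max D 1 := lt_max_of_lt_right one_pos
  have hlim : Tendsto (fun N : ℕ => max D 1 ^ ((1 : ℝ) / N) * β) atTop (𝓝 β) := by
    simpa using ((Real.continuousAt_const_rpow hD.ne').tendsto.comp
      tendsto_one_div_atTop_nhds_zero_nat).mul_const β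
  have hle : ∀ᶠ N : ℕ in atTop,
      u N ^ ((1 : ℝ) / N) ≤ max D 1 ^ ((1 : ℝ) / N) * β := by
    filter_upwards [h, eventually_ne_atTop 0] with N hN hN0
    calc u N ^ ((1 : ℝ) / N) ≤ (max D 1 * β ^ N) ^ ((1 : ℝ) / N) :=
          Real.rpow_le_rpow (hu N) (hN.trans (by gcongr; exact le_max_left D 1)) (by positivity)
      _ = max D 1 ^ ((1 : ℝ) / N) * β := by
          rw [Real.mul_rpow hD.le (by positivity), one_div,
            Real.pow_rpow_inv_natCast hβ.le hN0]
  rw [← hlim.limsup_eq]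
  exact limsup_le_limsup hle
    (isCoboundedUnder_le_of_le atTop fun N => Real.rpow_nonneg (hu N) _) hlim.isBoundedUnder_le

section Followers

variable {S : Type*} (A : Set (List S))

def Follows (x : S) (t : List S) : Prop :=
  ∃ u : List S, u ++ [x] ∈ A ∧ u ++ [x] ++ t ∈ A

def followers (x : S) (n : ℕ) : Set (List S) :=
  {t | t.length = n ∧ Follows A x t}

variable {A} {x y : S} {s t : List S}

theorem Follows.of_append (hpref : ∀ u v : List S, u ++ v ∈ A → u ∈ A)
    (h : Follows A x (s ++ t)) : Follows A x s := by
  obtain ⟨u, hux, hu⟩ := h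
  exact ⟨u, hux, hpref _ t (by rwa [List.append_assoc])⟩

theorem Follows.of_append_singleton (hpref : ∀ u v : List S, u ++ v ∈ A → u ∈ A)
    (h : Follows A x (s ++ [y] ++ t)) : Follows A y t := by
  obtain ⟨u, -, hu⟩ := h
  refine ⟨u ++ [x] ++ s, hpref _ t ?_, ?_⟩ <;> simpa using hu

theorem Follows.of_cons_mem (hpref : ∀ u v : List S, u ++ v ∈ A → u ∈ A) (h : x :: t ∈ A) :
    Follows A x t :=
  ⟨[], hpref [x] t h, h⟩

theorem followers_finite [Finite S] (x : S) (n : ℕ) : (followers A x n).Finite :=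
  (List.finite_length_eq S n).subset fun _ ht => ht.1

theorem ncard_followers_add_le [Finite S] (hpref : ∀ u v : List S, u ++ v ∈ A → u ∈ A)
    {m n : ℕ} (hm : 1 ≤ m) {B : ℝ} (hB : ∀ y, ((followers A y n).ncard : ℝ) ≤ B) :
    ((followers A x (m + n)).ncard : ℝ) ≤ (followers A x m).ncard * B := by
  have hF := followers_finite (A := A) x m
  -- The default `x` of `getLastD` is never used, as `1 ≤ m` makes every such `s` nonempty.
  have hsub : followers A x (m + n) ⊆
      ⋃ s ∈ hF.toFinset, (s ++ ·) '' followers A (s.getLastD x) n := by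
    rintro t ⟨hlen, ht⟩
    have hne : t.take m ≠ [] := List.length_pos_iff.1 (by simp [hlen]; omega)
    rw [← List.take_append_drop m t] at ht
    simp only [Set.mem_iUnion, Set.mem_image, Set.Finite.mem_toFinset]
    refine ⟨t.take m, ⟨by simp [hlen], ht.of_append hpref⟩, t.drop m,
      ⟨by simp [hlen], ?_⟩, List.take_append_drop m t⟩
    rw [← List.dropLast_append_getLast hne] at ht
    simpa [List.getLastD_eq_getLast?, List.getLast?_eq_some_getLast hne] using
      ht.of_append_singleton hpref
  have hU : (⋃ s ∈ hF.toFinset, (s ++ ·) '' followers A (s.getLastD x) n).Finite :=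
    hF.toFinset.finite_toSet.biUnion fun s _ => (followers_finite _ n).image _
  calc ((followers A x (m + n)).ncard : ℝ)
      ≤ ∑ s ∈ hF.toFinset, ((followers A (s.getLastD x) n).ncard : ℝ) := by
        exact_mod_cast (Set.ncard_le_ncard hsub hU).trans <|
          (Finset.set_ncard_biUnion_le _ _).trans <|
            Finset.sum_le_sum fun s _ => Set.ncard_image_le (followers_finite _ n)
    _ ≤ hF.toFinset.card • B := Finset.sum_le_card_nsmul _ _ _ fun s _ => hB _
    _ = (followers A x m).ncard * B := by rw [nsmul_eq_mul, Set.ncard_eq_toFinset_card _ hF]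

theorem ncard_length_succ_le [Fintype S] (hpref : ∀ u v : List S, u ++ v ∈ A → u ∈ A)
    (N : ℕ) : {w | w ∈ A ∧ w.length = N + 1}.ncard ≤ ∑ x, (followers A x N).ncard := by
  have hsub : {w | w ∈ A ∧ w.length = N + 1} ⊆ ⋃ x, (x :: ·) '' followers A x N := by
    rintro (_ | ⟨x, t⟩) ⟨hw, hlen⟩
    · simp at hlen
    · exact Set.mem_iUnion.2 ⟨x, t, ⟨by simpa using hlen, .of_cons_mem hpref hw⟩, rfl⟩
  have hU : (⋃ x, (x :: ·) '' followers A x N).Finite :=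
    Set.finite_iUnion fun x => (followers_finite x N).image _
  exact (Set.ncard_le_ncard hsub hU).trans <| (Set.ncard_iUnion_le_of_fintype _).trans <|
    Finset.sum_le_sum fun x _ => Set.ncard_image_le (followers_finite x N)

end Followers

open Filter in
theorem stmt_10_general {S : Type*} [Fintype S] (A : Set (List S)) (α : ℝ) (hα : 1 < α)
    (hpref : ∀ u v : List S, u ++ v ∈ A → u ∈ A)
    (r : S → ℕ) (hr : ∀ x, 1 ≤ r x)
    (hcount : ∀ x : S,
      (Set.ncard {t : List S | t.length = r x ∧
        ∃ u : List S, u ++ [x] ∈ A ∧ u ++ [x] ++ t ∈ A} : ℝ) < α ^ r x) :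
    limsup (fun N : ℕ =>
        (Set.ncard {w | w ∈ A ∧ w.length = N} : ℝ) ^ ((1 : ℝ) / N)) atTop < α := by
  obtain ⟨β, hβ1, hβα, hβ⟩ := exists_lt_forall_lt_pow hα hcount
  obtain ⟨C, hC, hfollowers⟩ :=
    exists_forall_le_mul_pow (f := fun x n => ((followers A x n).ncard : ℝ)) hr hβ1.le
      (fun _ _ => Nat.cast_nonneg _) fun x n B hB =>
        (ncard_followers_add_le hpref (hr x) hB).trans
          (mul_le_mul_of_nonneg_right (hβ x).le ((Nat.cast_nonneg _).trans (hB x)))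
  have hwords : ∀ N, ({w | w ∈ A ∧ w.length = N + 1}.ncard : ℝ) ≤
      (Fintype.card S * C) * β ^ (N + 1) := fun N =>
    calc ({w | w ∈ A ∧ w.length = N + 1}.ncard : ℝ)
        ≤ ∑ x, ((followers A x N).ncard : ℝ) := by
          exact_mod_cast ncard_length_succ_le hpref N
      _ ≤ ∑ _x : S, C * β ^ (N + 1) := Finset.sum_le_sum fun x _ => (hfollowers x N).trans <|
          mul_le_mul_of_nonneg_left (pow_le_pow_right₀ hβ1.le N.le_succ) hC
      _ = (Fintype.card S * C) * β ^ (N + 1) := by simp [mul_assoc]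
  have hev : ∀ᶠ N in atTop,
      ({w | w ∈ A ∧ w.length = N}.ncard : ℝ) ≤ (Fintype.card S * C) * β ^ N :=
    eventually_atTop.2 ⟨1, fun N hN => by
      obtain ⟨k, rfl⟩ := Nat.exists_eq_add_of_le' hN
      exact hwords k⟩
  exact (limsup_rpow_one_div_le (fun _ => Nat.cast_nonneg _) (by linarith) hev).trans_lt hβα

open Filter in
theorem stmt_10 {S : Type*} [Fintype S] (A : Set (List S)) (α : ℝ) (hα : 1 < α)
    (Sx : S → Set S)
    (hpref : ∀ u v : List S, u ++ v ∈ A → u ∈ A)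
    (hmarkov : ∀ w ∈ A, ∀ x : S, w.getLast? = some x →
      ∀ y : S, w ++ [y] ∈ A ↔ y ∈ Sx x)
    (r : S → ℕ) (hr : ∀ x, 1 ≤ r x)
    (hcount : ∀ x : S,
      (Set.ncard {t : List S | t.length = r x ∧
        ∃ u : List S, u ++ [x] ∈ A ∧ u ++ [x] ++ t ∈ A} : ℝ) < α ^ r x) :
    limsup (fun N : ℕ =>
        (Set.ncard {w | w ∈ A ∧ w.length = N} : ℝ) ^ ((1 : ℝ) / N)) atTop < α :=
  stmt_10_general A α hα hpref r hr hcount
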